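/- arXiv:2106.00395 — 5 statements merged into one kernel-verified Lean document; each statement's English description precedes it below -/
import Mathlib

section
/- Fix an odd integer n > 1 and an odd prime p. Then the set of squarefree positive integers d for which there exist an odd integer ℓ > 1 with ℓ ≡ 3 (mod 4), gcd(ℓ, p) = 1, p^2 < ℓ^n, together with a positive integer r satisfying p^2 − ℓ^n = −d·r^2 and such that p ≢ ±1 (mod d), is infinite. In particular, the family of imaginary quadratic fields ℚ(√(p^2 − ℓ^n)) satisfying the hypotheses of the theorem (ℓ ≡ 3 (mod 4), gcd(ℓ,p)=1, p^2 < ℓ^n, p ≢ ±1 (mod d)) contains infinitely many distinct fields. -/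
/-- For a fixed odd integer `n > 1` and odd prime `p`, the set of squarefree positive
integers `d` arising as squarefree parts of `ℓⁿ − p²` for some odd `ℓ > 1` with
`ℓ ≡ 3 (mod 4)`, `gcd(ℓ, p) = 1`, `p² < ℓⁿ` and `p ≢ ±1 (mod d)` is infinite; hence the
family of imaginary quadratic fields `ℚ(√(p² − ℓⁿ))` satisfying the hypotheses of the
theorem contains infinitely many distinct fields. -/
theorem infinite_squarefree_parts_sq_sub_pow
    (n p : ℕ) (hn1 : 1 < n) (hnodd : Odd n) (hp : p.Prime) (hpodd : Odd p) :
    {d : ℕ | Squarefree d ∧ 0 < d ∧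
      ∃ ℓ r : ℕ, 1 < ℓ ∧ Odd ℓ ∧ ℓ % 4 = 3 ∧ Nat.gcd ℓ p = 1 ∧
        (p : ℤ) ^ 2 < (ℓ : ℤ) ^ n ∧ 0 < r ∧
        (p : ℤ) ^ 2 - (ℓ : ℤ) ^ n = -(d : ℤ) * (r : ℤ) ^ 2 ∧
        ¬ ((p : ℤ) ≡ 1 [ZMOD (d : ℤ)]) ∧ ¬ ((p : ℤ) ≡ -1 [ZMOD (d : ℤ)])}.Infinite := by
  have hp2 : 2 ≤ p := hp.two_le
  have hp3 : 3 ≤ p := by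
    have : p ≠ 2 := by rintro rfl; exact absurd hpodd (by decide)
    omega
  apply Set.infinite_of_not_bddAbove
  rw [not_bddAbove_iff]
  intro N
  -- choose a large prime q ≡ 2 (mod n)
  have hnz : NeZero n := ⟨by omega⟩
  have cop2 : ∀ k : ℕ, Odd k → Nat.Coprime 2 k := fun k hk =>
    (Nat.prime_two.coprime_iff_not_dvd).mpr (Nat.two_dvd_ne_zero.mpr (Nat.odd_iff.mp hk))
  have h2u : IsUnit ((2 : ℕ) : ZMod n) := by
    rw [ZMod.isUnit_iff_coprime]
    exact cop2 n hnodd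
  obtain ⟨q, hqgt, hq, hqmod⟩ :=
    Nat.forall_exists_prime_gt_and_eq_mod h2u (N + p + n + 2)
  have hqp1 : p + 1 < q := by omega
  have hqn : n < q := by omega
  have hqN : N < q := by omega
  have hq2 : 2 ≤ q := hq.two_le
  have hqodd : Odd q := hq.odd_of_ne_two (by omega)
  -- gcd(n, q(q-1)) = 1
  have hqmod' : q ≡ 2 [MOD n] := (ZMod.natCast_eq_natCast_iff _ _ _).mp hqmod
  have hndvd : n ∣ q - 2 := (Nat.modEq_iff_dvd' (by omega)).mp hqmod'.symm
  have hcop1 : Nat.Coprime n (q - 1) := by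
    have h1 : Nat.gcd n (q - 1) ∣ q - 2 := (Nat.gcd_dvd_left _ _).trans hndvd
    have h2 : Nat.gcd n (q - 1) ∣ q - 1 := Nat.gcd_dvd_right _ _
    have h3 : Nat.gcd n (q - 1) ∣ 1 := by
      have h5 := Nat.dvd_sub h2 h1
      simpa [show (q - 1) - (q - 2) = 1 by omega] using h5
    exact Nat.dvd_one.mp h3
  have hcop2 : Nat.Coprime n q := ((hq.coprime_iff_not_dvd).mpr
    (fun h => absurd (Nat.le_of_dvd (by omega) h) (by omega))).symm
  -- the n-th power map is a bijection on (ZMod q²)ˣ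
  have hq2nz : NeZero (q ^ 2) := ⟨pow_ne_zero 2 (by omega)⟩
  have hcard : Nat.card (ZMod (q ^ 2))ˣ = q * (q - 1) := by
    rw [Nat.card_eq_fintype_card, ZMod.card_units_eq_totient,
      Nat.totient_prime_pow hq (by norm_num)]
    ring_nf
  have hcop : (Nat.card (ZMod (q ^ 2))ˣ).Coprime n := by
    rw [hcard]
    exact (Nat.Coprime.mul_right hcop2 hcop1).symm
  -- p² + q is a unit mod q²
  have hqndp : ¬ q ∣ p := fun h =>
    absurd (Nat.le_of_dvd (by omega) h) (by omega)
  have hu : IsUnit ((p ^ 2 + q : ℕ) : ZMod (q ^ 2)) := by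
    rw [ZMod.isUnit_iff_coprime]
    apply Nat.Coprime.pow_right
    rw [Nat.coprime_comm, hq.coprime_iff_not_dvd]
    intro h
    have : q ∣ p ^ 2 := (Nat.dvd_add_right (dvd_refl q)).mp (by rwa [add_comm] at h)
    exact hqndp (hq.dvd_of_dvd_pow this)
  obtain ⟨v, hv⟩ := (powCoprime hcop).surjective hu.unit
  -- a : ℕ with aⁿ ≡ p² + q (mod q²)
  set a : ℕ := ((v : (ZMod (q ^ 2))ˣ) : ZMod (q ^ 2)).val with ha
  have han : ((a : ZMod (q ^ 2))) ^ n = ((p ^ 2 + q : ℕ) : ZMod (q ^ 2)) := by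
    have h1 : ((a : ZMod (q ^ 2))) = ((v : (ZMod (q ^ 2))ˣ) : ZMod (q ^ 2)) :=
      ZMod.natCast_rightInverse _
    rw [h1, ← Units.val_pow_eq_pow_val]
    have h2 : v ^ n = hu.unit := hv
    rw [h2, IsUnit.unit_spec]
  -- CRT: find the residue class for ℓ
  have hc4p : Nat.Coprime 4 p := by
    exact Nat.Coprime.pow_left 2 (cop2 p hpodd)
  have hc4pq : Nat.Coprime (4 * p) (q ^ 2) := by
    refine Nat.coprime_mul_iff_left.mpr ⟨?_, ?_⟩ <;> apply Nat.Coprime.pow_right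
    · exact Nat.Coprime.pow_left 2 (cop2 q hqodd)
    · rw [Nat.coprime_primes hp hq]; omega
  obtain ⟨c1, hc1⟩ := Nat.chineseRemainder hc4p 3 1
  obtain ⟨c, hc⟩ := Nat.chineseRemainder hc4pq c1 a
  -- define ℓ
  set M := 4 * p * q ^ 2 with hM
  have hMpos : 0 < M := by positivity
  set ℓ := c + M * (p ^ 2 + 2) with hℓ
  have hℓM : ℓ ≡ c [MOD M] := by
    show ℓ % M = c % M
    rw [hℓ, Nat.add_mul_mod_self_left]
  have hℓgt : p ^ 2 < ℓ := by
    have : M * (p ^ 2 + 2) ≥ 1 * (p ^ 2 + 2) := Nat.mul_le_mul_right _ hMpos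
    omega
  have hpsq : 1 ≤ p ^ 2 := Nat.one_le_pow 2 p (by omega)
  have hℓ1 : 1 < ℓ := lt_of_le_of_lt hpsq hℓgt
  -- ℓ ≡ 3 (mod 4)
  have hℓc1 : ℓ ≡ c1 [MOD 4 * p] := (hℓM.of_dvd (dvd_mul_right (4 * p) (q ^ 2))).trans hc.1
  have hℓ4 : ℓ ≡ 3 [MOD 4] := (hℓc1.of_dvd (dvd_mul_right 4 p)).trans hc1.1
  have hℓmod4 : ℓ % 4 = 3 := by
    have := hℓ4; unfold Nat.ModEq at this; omega
  have hℓodd : Odd ℓ := by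
    rw [Nat.odd_iff]
    have h2 := Nat.mod_mod_of_dvd ℓ (by norm_num : 2 ∣ 4)
    omega
  -- gcd(ℓ, p) = 1
  have hℓp : ℓ ≡ 1 [MOD p] := (hℓc1.of_dvd (dvd_mul_left p 4)).trans hc1.2
  have hgcd : Nat.gcd ℓ p = 1 := by
    rw [Nat.gcd_comm]
    refine (hp.coprime_iff_not_dvd).mpr fun h => ?_
    have h0 : ℓ % p = 0 := Nat.dvd_iff_mod_eq_zero.mp h
    have h1 : ℓ % p = 1 % p := hℓp
    have h2 : 1 % p = 1 := Nat.mod_eq_of_lt (by omega)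
    omega
  -- p² < ℓⁿ
  have hpow : p ^ 2 < ℓ ^ n :=
    lt_of_lt_of_le hℓgt (Nat.le_self_pow (by omega) ℓ)
  -- ℓⁿ ≡ p² + q (mod q²)
  have hℓa : ℓ ≡ a [MOD q ^ 2] := (hℓM.of_dvd (dvd_mul_left (q ^ 2) (4 * p))).trans hc.2
  have hkey : ℓ ^ n ≡ p ^ 2 + q [MOD q ^ 2] := by
    have h1 : ((ℓ : ZMod (q ^ 2))) = (a : ZMod (q ^ 2)) :=
      (ZMod.natCast_eq_natCast_iff _ _ _).mpr hℓa
    have h2 : (((ℓ ^ n : ℕ)) : ZMod (q ^ 2)) = ((p ^ 2 + q : ℕ) : ZMod (q ^ 2)) := by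
      push_cast
      rw [h1]
      have := han
      push_cast at this ⊢
      rw [this]
    exact (ZMod.natCast_eq_natCast_iff _ _ _).mp h2
  -- m := ℓⁿ − p², q exactly divides m
  set m := ℓ ^ n - p ^ 2 with hm
  have hmpos : 0 < m := by omega
  have hmeq : ℓ ^ n = p ^ 2 + m := by omega
  have hmq : m ≡ q [MOD q ^ 2] := by
    have h1 : m + p ^ 2 ≡ q + p ^ 2 [MOD q ^ 2] := by
      calc m + p ^ 2 = ℓ ^ n := by omega
        _ ≡ p ^ 2 + q [MOD q ^ 2] := hkey
        _ = q + p ^ 2 := by ring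
    exact Nat.ModEq.add_right_cancel' _ h1
  have hqlt : q < q ^ 2 := by
    rw [pow_two]
    exact (lt_mul_iff_one_lt_left (by omega)).mpr (by omega)
  have hmmod : m % q ^ 2 = q := by
    have h1 : m % q ^ 2 = q % q ^ 2 := hmq
    rw [h1, Nat.mod_eq_of_lt hqlt]
  obtain ⟨k, hk⟩ : ∃ k, m = q + q ^ 2 * k :=
    ⟨m / q ^ 2, by have := Nat.div_add_mod m (q ^ 2); omega⟩
  have hqdm : q ∣ m := ⟨1 + q * k, by rw [hk]; ring⟩
  have hq2ndm : ¬ q ^ 2 ∣ m := by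
    intro h
    have h2 : q ^ 2 ∣ q := (Nat.dvd_add_right (dvd_mul_right (q ^ 2) k)).mp
      (by rwa [hk, add_comm] at h)
    exact absurd (Nat.le_of_dvd (by omega) h2) (not_le.mpr hqlt)
  -- squarefree part
  obtain ⟨d, r, hd0, hr0, hrd, hdsf⟩ := Nat.sq_mul_squarefree_of_pos hmpos
  have hqd : q ∣ d := by
    rcases (Nat.Prime.dvd_mul hq).mp (by rwa [← hrd] at hqdm) with h | h
    · exfalso
      have hqr : q ∣ r := hq.dvd_of_dvd_pow h
      exact hq2ndm (dvd_trans (pow_dvd_pow_of_dvd hqr 2) ⟨d, hrd.symm⟩)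
    · exact h
  have hdN : N < d := lt_of_lt_of_le hqN (Nat.le_of_dvd hd0 hqd)
  -- p ≢ ±1 (mod d)
  have hqdZ : (q : ℤ) ∣ (d : ℤ) := Int.natCast_dvd_natCast.mpr hqd
  refine ⟨d, ⟨hdsf, hd0, ℓ, r, hℓ1, hℓodd, hℓmod4, hgcd, ?_, hr0, ?_, ?_, ?_⟩, hdN⟩
  · exact_mod_cast hpow
  · have : (ℓ : ℤ) ^ n = (p : ℤ) ^ 2 + (r : ℤ) ^ 2 * (d : ℤ) := by
      have : (ℓ ^ n : ℕ) = p ^ 2 + r ^ 2 * d := by rw [hmeq, hrd]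
      exact_mod_cast this
    linarith [this]
  · intro h
    have h1 : (q : ℤ) ∣ 1 - (p : ℤ) := hqdZ.trans h.dvd
    have h2 : (q : ℤ) ∣ (p : ℤ) - 1 := by
      have h4 := dvd_neg.mpr h1
      rwa [neg_sub] at h4
    have h3 : (q : ℤ) ≤ (p : ℤ) - 1 := Int.le_of_dvd (by
      have hP : (3 : ℤ) ≤ (p : ℤ) := by exact_mod_cast hp3
      linarith) h2
    have hq' : (p : ℤ) + 1 < (q : ℤ) := by exact_mod_cast hqp1
    linarith
  · intro h
    have h1 : (q : ℤ) ∣ -1 - (p : ℤ) := hqdZ.trans h.dvd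
    have h2 : (q : ℤ) ∣ (p : ℤ) + 1 := by
      have h4 := dvd_neg.mpr h1
      have he : -(-1 - (p : ℤ)) = (p : ℤ) + 1 := by ring
      rwa [he] at h4
    have h3 : (q : ℤ) ≤ (p : ℤ) + 1 := Int.le_of_dvd (by positivity) h2
    have hq' : (p : ℤ) + 1 < (q : ℤ) := by exact_mod_cast hqp1
    linarith
end

section
/- For any odd integer n ≥ 3, the set of imaginary quadratic fields {ℚ(√(1 − 4k^n)) : k an integer, k ≥ 2} is infinite; equivalently, the set of squarefree parts of the integers 1 − 4k^n, as k ranges over the integers k ≥ 2, is infinite. -/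
/-!
Put `k₀ = 2` and `kᵢ₊₁ = kᵢ (4kᵢⁿ - 1)`, and `Nᵢ = 4kᵢⁿ - 1`. For `i < j`, `Nᵢ` divides `kⱼ`, so
`Nⱼ ≡ -1 (mod Nᵢ)` and the `Nᵢ` are pairwise coprime. If `ℚ(√-Nᵢ) = ℚ(√-Nⱼ)`, writing
`√-Nⱼ = p + q√-Nᵢ` and squaring forces `p = 0`, so `NᵢNⱼ` is a square; by coprimality `Nᵢ` is
then a square, which is impossible since `Nᵢ ≡ 3 (mod 4)`.
-/

/-- The quadratic field `ℚ(√d)`, realized as the subfield of `ℂ` generated over `ℚ`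
by a complex square root of `d`. -/
noncomputable def Qsqrt (d : ℤ) : IntermediateField ℚ ℂ :=
  IntermediateField.adjoin ℚ {((d : ℂ) ^ ((1 : ℂ) / 2))}

/-- The class number of `ℚ(√d)`: the order of the ideal class group of its ring of
integers. -/
noncomputable def classNumSqrt (d : ℤ) : ℕ :=
  Nat.card (ClassGroup (NumberField.RingOfIntegers (Qsqrt d)))

open IntermediateField

lemma exists_eq_add_mul_of_mem_adjoin {K L : Type*} [Field K] [Field L] [Algebra K L] {x : L}
    {c : K} (hx : x ^ 2 = algebraMap K L c) {y : L} (hy : y ∈ K⟮x⟯) :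
    ∃ p q : K, y = algebraMap K L p + algebraMap K L q * x := by
  have hx_alg : IsAlgebraic K x :=
    (IsIntegral.of_pow two_pos (hx ▸ isIntegral_algebraMap)).isAlgebraic
  replace hy : y ∈ Algebra.adjoin K {x} := by
    rwa [← adjoin_simple_toSubalgebra_of_isAlgebraic hx_alg]
  induction hy using Algebra.adjoin_induction with
  | mem z hz => exact ⟨0, 1, by rw [Set.mem_singleton_iff.mp hz]; simp⟩
  | algebraMap r => exact ⟨r, 0, by simp⟩
  | add a b _ _ ha hb =>
    obtain ⟨p, q, rfl⟩ := ha
    obtain ⟨r, s, rfl⟩ := hb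
    exact ⟨p + r, q + s, by simp only [map_add]; ring⟩
  | mul a b _ _ ha hb =>
    obtain ⟨p, q, rfl⟩ := ha
    obtain ⟨r, s, rfl⟩ := hb
    refine ⟨p * r + q * s * c, p * s + q * r, ?_⟩
    simp only [map_add, map_mul]
    linear_combination (algebraMap K L q * algebraMap K L s) * hx

lemma isSquare_mul_of_Qsqrt_eq {d e : ℤ} (hd : ¬IsSquare (d : ℚ)) (he : ¬IsSquare (e : ℚ))
    (h : Qsqrt d = Qsqrt e) : IsSquare (d * e) := by
  set x : ℂ := (d : ℂ) ^ (1 / 2 : ℂ)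
  set y : ℂ := (e : ℂ) ^ (1 / 2 : ℂ)
  have hx : x ^ 2 = algebraMap ℚ ℂ d := by simp [x]
  have hy_mem : y ∈ ℚ⟮x⟯ := by
    rw [show ℚ⟮x⟯ = Qsqrt e from h]; exact mem_adjoin_simple_self ℚ y
  obtain ⟨p, q, hpq⟩ := exists_eq_add_mul_of_mem_adjoin hx hy_mem
  have hcross : ((2 * p * q : ℚ) : ℂ) * x = ((e - p ^ 2 - q ^ 2 * d : ℚ) : ℂ) := by
    have hy : y ^ 2 = e := by simp [y]
    rw [hpq] at hy
    simp only [eq_ratCast, map_intCast] at hx hy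
    push_cast
    linear_combination hy - (q : ℂ) ^ 2 * hx
  rcases eq_or_ne p 0 with rfl | hp
  · have he_eq : (e : ℚ) = q ^ 2 * d := by
      have : ((e - q ^ 2 * d : ℚ) : ℂ) = 0 := by simpa using hcross.symm
      exact sub_eq_zero.mp (by exact_mod_cast this)
    rw [← Rat.isSquare_intCast_iff]
    exact ⟨q * d, by push_cast; rw [he_eq]; ring⟩
  rcases eq_or_ne q 0 with rfl | hq
  · have he_eq : (e : ℚ) = p ^ 2 := by
      have : ((e - p ^ 2 : ℚ) : ℂ) = 0 := by simpa using hcross.symm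
      exact sub_eq_zero.mp (by exact_mod_cast this)
    exact absurd ⟨p, by rw [he_eq, sq]⟩ he
  -- otherwise `x` itself would be rational
  have hx_rat : x = ((e - p ^ 2 - q ^ 2 * d) / (2 * p * q) : ℚ) := by
    rw [Rat.cast_div, ← hcross]
    field_simp
  refine absurd ⟨(e - p ^ 2 - q ^ 2 * d) / (2 * p * q), ?_⟩ hd
  rw [hx_rat, eq_ratCast] at hx
  exact_mod_cast (hx.symm.trans (sq _))

lemma Int.isSquare_of_isCoprime_of_isSquare_mul {a b : ℤ} (hab : IsCoprime a b) (ha : 0 < a)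
    (h : IsSquare (a * b)) : IsSquare a := by
  obtain ⟨c, hc⟩ := h
  obtain ⟨a₀, rfl | rfl⟩ := Int.sq_of_isCoprime hab (hc.trans (sq c).symm)
  · exact ⟨a₀, sq a₀⟩
  · nlinarith [sq_nonneg a₀]

lemma Int.not_isSquare_four_mul_sub_one (m : ℤ) : ¬IsSquare (4 * m - 1) := by
  intro h
  have h4 : IsSquare ((4 * m - 1 : ℤ) : ZMod 4) := h.map (Int.castRingHom (ZMod 4))
  have : ((4 * m - 1 : ℤ) : ZMod 4) = 3 := by
    push_cast
    rw [show (4 : ZMod 4) = 0 from rfl, zero_mul, zero_sub]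
    rfl
  rw [this] at h4
  revert h4
  decide

lemma four_mul_pow_sub_one_pos {k : ℤ} (hk : 1 ≤ k) (n : ℕ) : 0 < 4 * k ^ n - 1 := by
  linarith [one_le_pow₀ (n := n) hk]

lemma isCoprime_four_mul_pow_sub_one_of_dvd {a k : ℤ} {n : ℕ} (hn : n ≠ 0) (h : a ∣ k) :
    IsCoprime a (4 * k ^ n - 1) := by
  obtain ⟨s, hs⟩ : a ∣ 4 * k ^ n := (h.pow hn).mul_left 4
  exact ⟨s, -1, by rw [hs]; ring⟩

/-- A Euclid-style sequence: each term is divisible by all earlier values of `4 kⁿ - 1`,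
which makes those values pairwise coprime. -/
def euclidSeq (n : ℕ) : ℕ → ℤ
  | 0 => 2
  | i + 1 => euclidSeq n i * (4 * euclidSeq n i ^ n - 1)

namespace euclidSeq

lemma two_le (n i : ℕ) : 2 ≤ euclidSeq n i := by
  induction i with
  | zero => rfl
  | succ i ih =>
    have := four_mul_pow_sub_one_pos (by omega : 1 ≤ euclidSeq n i) n
    rw [euclidSeq]
    nlinarith

lemma four_mul_pow_sub_one_dvd (n : ℕ) {i j : ℕ} (hij : i < j) :
    4 * euclidSeq n i ^ n - 1 ∣ euclidSeq n j := by
  induction j, hij using Nat.le_induction with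
  | base => exact dvd_mul_left _ _
  | succ j _ ih => exact ih.mul_right _

lemma isCoprime_four_mul_pow_sub_one {n : ℕ} (hn : n ≠ 0) {i j : ℕ} (hij : i < j) :
    IsCoprime (4 * euclidSeq n i ^ n - 1) (4 * euclidSeq n j ^ n - 1) :=
  isCoprime_four_mul_pow_sub_one_of_dvd hn (four_mul_pow_sub_one_dvd n hij)

lemma injective_Qsqrt_one_sub_four_mul_pow {n : ℕ} (hn : n ≠ 0) :
    Function.Injective fun i ↦ Qsqrt (1 - 4 * euclidSeq n i ^ n) := by
  refine Function.Injective.of_lt_imp_ne fun i j hij heq ↦ ?_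
  have hpos (k : ℕ) : 0 < 4 * euclidSeq n k ^ n - 1 :=
    four_mul_pow_sub_one_pos (by linarith [two_le n k]) n
  have hneg (k : ℕ) : ¬IsSquare ((1 - 4 * euclidSeq n k ^ n : ℤ) : ℚ) := fun h ↦
    (h.nonneg).not_gt (by exact_mod_cast (by linarith [hpos k] : 1 - 4 * euclidSeq n k ^ n < 0))
  have hsq : IsSquare ((4 * euclidSeq n i ^ n - 1) * (4 * euclidSeq n j ^ n - 1)) := by
    convert isSquare_mul_of_Qsqrt_eq (hneg i) (hneg j) heq using 1
    ring
  exact Int.not_isSquare_four_mul_sub_one _ <|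
    Int.isSquare_of_isCoprime_of_isSquare_mul (isCoprime_four_mul_pow_sub_one hn hij) (hpos i) hsq

end euclidSeq

theorem infinite_fields_one_sub_four_pow_general (n : ℕ) (hn : 3 ≤ n) :
    {F : IntermediateField ℚ ℂ | ∃ k : ℤ, 2 ≤ k ∧ F = Qsqrt (1 - 4 * k ^ n)}.Infinite :=
  Set.infinite_of_injective_forall_mem (euclidSeq.injective_Qsqrt_one_sub_four_mul_pow (by omega))
    fun i ↦ ⟨euclidSeq n i, euclidSeq.two_le n i, rfl⟩

/-- For any odd integer `n ≥ 3`, the set of imaginary quadratic fields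
`ℚ(√(1 − 4kⁿ))` for integers `k ≥ 2` is infinite. -/
theorem infinite_fields_one_sub_four_pow (n : ℕ) (hn : 3 ≤ n) (hnodd : Odd n) :
    {F : IntermediateField ℚ ℂ | ∃ k : ℤ, 2 ≤ k ∧ F = Qsqrt (1 - 4 * k ^ n)}.Infinite :=
  infinite_fields_one_sub_four_pow_general n hn
end

section
/- Let p, b, d be positive integers and let ℓ > 1, s ≥ 1 be integers such that p^2 + d·b^2 = ℓ^s and gcd(ℓ^s, 4·d·b^2) = 1. Define the complex numbers α = p + b·√(−d) and β = −p + b·√(−d), where √(−d) = i√d. Then (α + β)^2 = −4db^2 and α·β = −ℓ^s are nonzero coprime rational integers, and α/β is not a root of unity. -/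
open Complex

/-- coefficients of `(P + b√(-d))^n` in the basis `1, √(-d)`. -/
def lehmerXY (P : ℤ) (b d : ℕ) : ℕ → ℤ × ℤ
  | 0 => (1, 0)
  | n+1 => (P * (lehmerXY P b d n).1 - (d : ℤ) * (b : ℤ) * (lehmerXY P b d n).2,
            (b : ℤ) * (lehmerXY P b d n).1 + P * (lehmerXY P b d n).2)

lemma lehmerXY_pow (P : ℤ) (b d : ℕ) (ω : ℂ) (hωsq : ω * ω = -(d : ℂ)) (n : ℕ) :
    ((P : ℂ) + (b : ℂ) * ω) ^ n =
      ((lehmerXY P b d n).1 : ℂ) + ((lehmerXY P b d n).2 : ℂ) * ω := by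
  induction n with
  | zero => simp [lehmerXY]
  | succ n ih =>
    rw [pow_succ, ih, lehmerXY]
    push_cast
    linear_combination ((b : ℂ) * ((lehmerXY P b d n).2 : ℂ)) * hωsq

lemma lehmerXY_neg (P : ℤ) (b d : ℕ) (n : ℕ) :
    lehmerXY (-P) b d n =
      ((-1) ^ n * (lehmerXY P b d n).1, -(-1) ^ n * (lehmerXY P b d n).2) := by
  induction n with
  | zero => simp [lehmerXY]
  | succ n ih =>
    rw [lehmerXY, ih, lehmerXY]
    rw [Prod.mk.injEq]
    constructor <;> (simp only []; ring)

lemma lehmerXY_mod (p b d ℓ : ℕ)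
    (hmod : (p : ZMod ℓ) ^ 2 + (d : ZMod ℓ) * (b : ZMod ℓ) ^ 2 = 0) (n : ℕ) :
    ((lehmerXY (p : ℤ) b d (n+1)).1 : ZMod ℓ) = (2 * p : ZMod ℓ) ^ n * p ∧
    ((lehmerXY (p : ℤ) b d (n+1)).2 : ZMod ℓ) = (2 * p : ZMod ℓ) ^ n * b := by
  induction n with
  | zero => rw [lehmerXY]; simp [lehmerXY]
  | succ n ih =>
    obtain ⟨h1, h2⟩ := ih
    rw [lehmerXY]
    constructor
    · push_cast
      rw [h1, h2]
      linear_combination (-(2 * (p : ZMod ℓ)) ^ n) * hmod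
    · push_cast
      rw [h1, h2]
      ring

/-- Let `p, b, d` be positive integers and `ℓ > 1`, `s ≥ 1` integers with
`p² + db² = ℓˢ` and `gcd(ℓˢ, 4db²) = 1`. With `α = p + b√(−d)` and `β = −p + b√(−d)`
(where `√(−d) = i√d`), the numbers `(α + β)² = −4db²` and `αβ = −ℓˢ` are nonzero coprime
rational integers, and `α/β` is not a root of unity. -/
theorem lehmer_pair_of_sq_add
    (p b d ℓ s : ℕ) (hp : 0 < p) (hb : 0 < b) (hd : 0 < d) (hℓ : 1 < ℓ) (hs : 1 ≤ s)
    (heq : p ^ 2 + d * b ^ 2 = ℓ ^ s) (hgcd : Nat.gcd (ℓ ^ s) (4 * d * b ^ 2) = 1) :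
    (((p : ℂ) + b * (Complex.I * Real.sqrt d)) +
        (-(p : ℂ) + b * (Complex.I * Real.sqrt d))) ^ 2 =
        ((-(4 * d * b ^ 2) : ℤ) : ℂ) ∧
      ((p : ℂ) + b * (Complex.I * Real.sqrt d)) *
        (-(p : ℂ) + b * (Complex.I * Real.sqrt d)) = ((-(ℓ ^ s : ℤ) : ℤ) : ℂ) ∧
      (-(4 * d * b ^ 2) : ℤ) ≠ 0 ∧ (-(ℓ ^ s : ℤ) : ℤ) ≠ 0 ∧
      IsCoprime (-(4 * d * b ^ 2) : ℤ) (-(ℓ ^ s : ℤ) : ℤ) ∧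
      ¬ ∃ k : ℕ, 0 < k ∧
        (((p : ℂ) + b * (Complex.I * Real.sqrt d)) /
          (-(p : ℂ) + b * (Complex.I * Real.sqrt d))) ^ k = 1 := by
  have hωsq : (Complex.I * Real.sqrt d) * (Complex.I * Real.sqrt d) = -(d : ℂ) := by
    have h1 : Real.sqrt d * Real.sqrt d = (d : ℝ) :=
      Real.mul_self_sqrt (Nat.cast_nonneg d)
    calc (Complex.I * Real.sqrt d) * (Complex.I * Real.sqrt d)
        = (Complex.I * Complex.I) * ((Real.sqrt d * Real.sqrt d : ℝ) : ℂ) := by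
          push_cast; ring
      _ = -(d : ℂ) := by rw [h1, Complex.I_mul_I]; push_cast; ring
  have heqC : (p : ℂ) ^ 2 + (d : ℂ) * (b : ℂ) ^ 2 = (ℓ : ℂ) ^ s := by exact_mod_cast heq
  refine ⟨?_, ?_, ?_, ?_, ?_, ?_⟩
  · push_cast
    linear_combination (4 * (b : ℂ) ^ 2) * hωsq
  · push_cast
    linear_combination ((b : ℂ) ^ 2) * hωsq - heqC
  · exact neg_ne_zero.mpr (by positivity)
  · exact neg_ne_zero.mpr (by positivity)
  · rw [Int.isCoprime_iff_gcd_eq_one]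
    have : Int.gcd (-(4 * d * b ^ 2) : ℤ) (-(ℓ ^ s : ℤ) : ℤ) = Nat.gcd (4 * d * b ^ 2) (ℓ ^ s) := by
      simp [Int.gcd, Int.natAbs_mul, Int.natAbs_pow]
    rw [this, Nat.gcd_comm]
    exact hgcd
  · rintro ⟨k, hk0, hk1⟩
    haveI : NeZero ℓ := ⟨by omega⟩
    haveI : Fact (1 < ℓ) := ⟨hℓ⟩
    -- β ≠ 0
    have hsd : (0 : ℝ) < Real.sqrt d := Real.sqrt_pos.mpr (by positivity)
    have hβ : (-(p : ℂ) + b * (Complex.I * Real.sqrt d)) ≠ 0 := by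
      intro h
      have him := congrArg Complex.im h
      simp at him
      rcases him with h | h
      · exact absurd h (by positivity)
      · exact absurd h (by positivity)
    rw [div_pow, div_eq_one_iff_eq (pow_ne_zero k hβ)] at hk1
    -- express both powers
    have e1 := lehmerXY_pow (p : ℤ) b d _ hωsq k
    have e2 := lehmerXY_pow (-(p : ℤ)) b d _ hωsq k
    rw [lehmerXY_neg] at e2
    set X := (lehmerXY (p : ℤ) b d k).1 with hX
    set Y := (lehmerXY (p : ℤ) b d k).2 with hY
    push_cast at e1 e2
    rw [e1, e2] at hk1
    -- coprimality facts
    have hcop : Nat.Coprime ℓ (4 * d * b ^ 2) :=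
      Nat.Coprime.coprime_dvd_left (dvd_pow_self ℓ (by omega)) hgcd
    have hcop2 : Nat.Coprime ℓ 2 :=
      Nat.Coprime.coprime_dvd_right ⟨2 * d * b ^ 2, by ring⟩ hcop
    have hcopb : Nat.Coprime ℓ b :=
      Nat.Coprime.coprime_dvd_right ⟨4 * d * b, by ring⟩ hcop
    have hcopp : Nat.Coprime ℓ p := by
      have hg : Nat.gcd ℓ p ∣ Nat.gcd (ℓ ^ s) (4 * d * b ^ 2) := by
        apply Nat.dvd_gcd
        · exact (Nat.gcd_dvd_left ℓ p).trans (dvd_pow_self ℓ (by omega))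
        · have h1 : Nat.gcd ℓ p ∣ d * b ^ 2 := by
            have : d * b ^ 2 = ℓ ^ s - p ^ 2 := by omega
            rw [this]
            exact Nat.dvd_sub ((Nat.gcd_dvd_left ℓ p).trans (dvd_pow_self ℓ (by omega)))
              ((Nat.gcd_dvd_right ℓ p).trans (dvd_pow_self p two_ne_zero))
          have h2 : 4 * d * b ^ 2 = 4 * (d * b ^ 2) := by ring
          rw [h2]
          exact h1.mul_left 4
      rw [hgcd] at hg
      exact Nat.eq_one_of_dvd_one hg
    -- the key unit
    have hunit2p : IsUnit (2 * (p : ZMod ℓ)) := by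
      have : ((2 * p : ℕ) : ZMod ℓ) = 2 * (p : ZMod ℓ) := by push_cast; ring
      rw [← this]
      rw [ZMod.isUnit_iff_coprime]
      exact (Nat.Coprime.mul hcop2.symm hcopp.symm : Nat.Coprime (2 * p) ℓ)
    have hunitp : IsUnit ((p : ℕ) : ZMod ℓ) := by
      rw [ZMod.isUnit_iff_coprime]; exact hcopp.symm
    have hunitb : IsUnit ((b : ℕ) : ZMod ℓ) := by
      rw [ZMod.isUnit_iff_coprime]; exact hcopb.symm
    -- mod relation
    have hmod : (p : ZMod ℓ) ^ 2 + (d : ZMod ℓ) * (b : ZMod ℓ) ^ 2 = 0 := by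
      have := congrArg (Nat.cast : ℕ → ZMod ℓ) heq
      push_cast at this
      rw [this, ZMod.natCast_self, zero_pow (by omega)]
    obtain ⟨n, rfl⟩ : ∃ n, k = n + 1 := ⟨k - 1, by omega⟩
    obtain ⟨hmx, hmy⟩ := lehmerXY_mod p b d ℓ hmod n
    rcases Nat.even_or_odd (n + 1) with he | ho
    · -- even: Y = 0, but Y ≡ (2p)^n b is a unit mod ℓ
      rw [he.neg_one_pow] at hk1
      have him := congrArg Complex.im hk1
      simp at him
      have hY0 : Y = 0 := by
        have h1 : (Y : ℝ) * Real.sqrt d = 0 := by linarith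
        rcases mul_eq_zero.mp h1 with h | h
        · exact_mod_cast h
        · exact absurd h (ne_of_gt hsd)
      have hu : IsUnit ((2 * (p : ZMod ℓ)) ^ n * ((b : ℕ) : ZMod ℓ)) :=
        (hunit2p.pow n).mul hunitb
      exact hu.ne_zero (by rw [← hmy, ← hY, hY0]; simp)
    · -- odd: X = 0, but X ≡ (2p)^n p is a unit mod ℓ
      rw [ho.neg_one_pow] at hk1
      have hre := congrArg Complex.re hk1
      simp at hre
      have hX0 : X = 0 := by
        have : (X : ℝ) = -(X : ℝ) := by linarith [hre]
        have : (X : ℝ) = 0 := by linarith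
        exact_mod_cast this
      have hu : IsUnit ((2 * (p : ZMod ℓ)) ^ n * ((p : ℕ) : ZMod ℓ)) :=
        (hunit2p.pow n).mul hunitp
      exact hu.ne_zero (by rw [← hmx, ← hX, hX0]; simp)
end

section
/- Let d be a squarefree positive integer, p an odd prime, and a, b, r positive integers, and let t be an odd positive integer, ε ∈ {1, −1}, μ ∈ {1, −1}. If p + r·√(−d) = ε·(a + μ·b·√(−d))^t in the ring ℤ[√(−d)], then a divides p; consequently a = 1 or a = p. -/
/-! Comparing real parts, `p = ε · Re((a + μb√-d)ᵗ)`. Expanding `(x + y√D)ⁿ`, the real part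
collects the terms `xⁿ⁻²ʲ (y√D)²ʲ`, and for odd `n` each of them contains a factor `x`; so
`a ∣ p`, and primality of `p` leaves `a = 1` or `a = p`. -/

namespace Zsqrtd

variable {D a : ℤ} {z : ℤ√D}

theorem dvd_re_pow_of_odd_and_dvd_im_pow_of_even (h : a ∣ z.re) (n : ℕ) :
    (Odd n → a ∣ (z ^ n).re) ∧ (Even n → a ∣ (z ^ n).im) := by
  induction n with
  | zero => simp
  | succ n ih =>
    rw [pow_succ, re_mul, im_mul, Nat.odd_add_one, Nat.even_add_one, Nat.not_odd_iff_even,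
      Nat.not_even_iff_odd]
    refine ⟨fun hn => ?_, fun hn => ?_⟩
    · exact dvd_add (dvd_mul_of_dvd_right h _) ((ih.2 hn).mul_left D |>.mul_right _)
    · exact dvd_add ((ih.1 hn).mul_right _) (dvd_mul_of_dvd_right h _)

theorem dvd_re_pow_of_odd (h : a ∣ z.re) {n : ℕ} (hn : Odd n) : a ∣ (z ^ n).re :=
  (dvd_re_pow_of_odd_and_dvd_im_pow_of_even h n).1 hn

end Zsqrtd

theorem dvd_of_eq_pow_in_Zsqrtd_general
    (d p a b r t : ℕ)
    (hp : p.Prime)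
    (ht : Odd t) (ε μ : ℤ)
    (heq : (⟨(p : ℤ), (r : ℤ)⟩ : Zsqrtd (-(d : ℤ))) =
      (ε : Zsqrtd (-(d : ℤ))) * (⟨(a : ℤ), μ * (b : ℤ)⟩ : Zsqrtd (-(d : ℤ))) ^ t) :
    a ∣ p ∧ (a = 1 ∨ a = p) := by
  have hre : (p : ℤ) = ε * ((⟨(a : ℤ), μ * (b : ℤ)⟩ : Zsqrtd (-(d : ℤ))) ^ t).re := by
    simpa [Zsqrtd.re_mul] using congrArg Zsqrtd.re heq
  have hap : a ∣ p := by
    rw [← Int.natCast_dvd_natCast, hre]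
    exact dvd_mul_of_dvd_right (Zsqrtd.dvd_re_pow_of_odd dvd_rfl ht) ε
  exact ⟨hap, hp.eq_one_or_self_of_dvd a hap⟩

/-- Let `d` be a squarefree positive integer, `p` an odd prime, `a, b, r` positive
integers, `t` an odd positive integer, and `ε, μ ∈ {1, −1}`. If
`p + r√(−d) = ε(a + μb√(−d))ᵗ` in `ℤ[√(−d)]`, then `a ∣ p`; consequently `a = 1` or
`a = p`. -/
theorem dvd_of_eq_pow_in_Zsqrtd
    (d p a b r t : ℕ) (hd : Squarefree (d : ℤ)) (hdpos : 0 < d)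
    (hp : p.Prime) (hpodd : Odd p) (ha : 0 < a) (hb : 0 < b) (hr : 0 < r)
    (ht : Odd t) (htpos : 0 < t) (ε μ : ℤ) (hε : ε = 1 ∨ ε = -1) (hμ : μ = 1 ∨ μ = -1)
    (heq : (⟨(p : ℤ), (r : ℤ)⟩ : Zsqrtd (-(d : ℤ))) =
      (ε : Zsqrtd (-(d : ℤ))) * (⟨(a : ℤ), μ * (b : ℤ)⟩ : Zsqrtd (-(d : ℤ))) ^ t) :
    a ∣ p ∧ (a = 1 ∨ a = p) :=
  dvd_of_eq_pow_in_Zsqrtd_general d p a b r t hp ht ε μ heq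
end

section
/- Let d be a squarefree positive integer, p an odd prime, and b, r positive integers, let t be an odd positive integer, and ε ∈ {1, −1}, μ ∈ {1, −1}. If p + r·√(−d) = ε·(1 + μ·b·√(−d))^t in the ring ℤ[√(−d)] (that is, the case a = 1), then p ≡ 1 (mod d) or p ≡ −1 (mod d). -/
/-! Reduction modulo `d` kills the `√d` part of every product in `ℤ[√d]`, so `z ↦ z.re mod d` is
multiplicative and `(1 + y√d)ᵗ` has real part `≡ 1`. Hence `p = ε · re((1 + μb√−d)ᵗ) ≡ ε (mod d)`. -/

namespace Zsqrtd

theorem re_mul_modEq {d : ℤ} (z w : ℤ√d) : (z * w).re ≡ z.re * w.re [ZMOD d] := by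
  rw [Int.modEq_iff_dvd, re_mul]
  exact ⟨-(z.im * w.im), by ring⟩

theorem re_pow_modEq {d : ℤ} (z : ℤ√d) (n : ℕ) : (z ^ n).re ≡ z.re ^ n [ZMOD d] := by
  induction n with
  | zero => simp
  | succ n ih =>
    rw [pow_succ, pow_succ]
    exact (re_mul_modEq _ _).trans (ih.mul_right _)

end Zsqrtd

theorem modEq_of_eq_pow_in_Zsqrtd_a_eq_one_general
    (d p b r t : ℕ)
    (ε μ : ℤ) (hε : ε = 1 ∨ ε = -1)
    (heq : (⟨(p : ℤ), (r : ℤ)⟩ : Zsqrtd (-(d : ℤ))) =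
      (ε : Zsqrtd (-(d : ℤ))) * (⟨1, μ * (b : ℤ)⟩ : Zsqrtd (-(d : ℤ))) ^ t) :
    (p : ℤ) ≡ 1 [ZMOD (d : ℤ)] ∨ (p : ℤ) ≡ -1 [ZMOD (d : ℤ)] := by
  have hp : (p : ℤ) = ε * ((⟨1, μ * b⟩ : Zsqrtd (-(d : ℤ))) ^ t).re := by
    simpa only [Zsqrtd.re_smul] using congrArg Zsqrtd.re heq
  have hre : ((⟨1, μ * b⟩ : Zsqrtd (-(d : ℤ))) ^ t).re ≡ 1 [ZMOD d] := by
    simpa using Int.modEq_neg.mp (Zsqrtd.re_pow_modEq (⟨1, μ * b⟩ : Zsqrtd (-(d : ℤ))) t)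
  have hpε : (p : ℤ) ≡ ε [ZMOD d] := by
    simpa [hp] using hre.mul_left ε
  rcases hε with rfl | rfl
  · exact .inl hpε
  · exact .inr hpε

/-- Let `d` be a squarefree positive integer, `p` an odd prime, `b, r` positive integers,
`t` an odd positive integer, and `ε, μ ∈ {1, −1}`. If
`p + r√(−d) = ε(1 + μb√(−d))ᵗ` in `ℤ[√(−d)]` (the case `a = 1`), then `p ≡ 1 (mod d)` or
`p ≡ −1 (mod d)`. -/
theorem modEq_of_eq_pow_in_Zsqrtd_a_eq_one
    (d p b r t : ℕ) (hd : Squarefree (d : ℤ)) (hdpos : 0 < d)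
    (hp : p.Prime) (hpodd : Odd p) (hb : 0 < b) (hr : 0 < r)
    (ht : Odd t) (htpos : 0 < t) (ε μ : ℤ) (hε : ε = 1 ∨ ε = -1) (hμ : μ = 1 ∨ μ = -1)
    (heq : (⟨(p : ℤ), (r : ℤ)⟩ : Zsqrtd (-(d : ℤ))) =
      (ε : Zsqrtd (-(d : ℤ))) * (⟨1, μ * (b : ℤ)⟩ : Zsqrtd (-(d : ℤ))) ^ t) :
    (p : ℤ) ≡ 1 [ZMOD (d : ℤ)] ∨ (p : ℤ) ≡ -1 [ZMOD (d : ℤ)] :=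
  modEq_of_eq_pow_in_Zsqrtd_a_eq_one_general d p b r t ε μ hε heq
end
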